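/- Let (X, d) be a metric space and let P = (p₀,…,p_{n−1}) ⊆ X be ordered by a greedy permutation. Then for every i ≤ n and all distinct indices j, k < i, d(p_j, p_k) ≥ d_H(P_i, P); that is, the points of the i-th prefix P_i are pairwise separated by at least the Hausdorff distance from P_i to P. -/
import Mathlib


open Metric

/-- The set `{p_j : j < i}` of the first `i` points of an ordering. -/
def prefixSet {X : Type*} {n : ℕ} (p : Fin n → X) (i : ℕ) : Set X :=
  {x | ∃ j : Fin n, (j : ℕ) < i ∧ p j = x}

lemma prefixSet_subset_range {X : Type*} {n : ℕ} (p : Fin n → X) (i : ℕ) :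
    prefixSet p i ⊆ Set.range p := by
  rintro x ⟨j, _, rfl⟩; exact ⟨j, rfl⟩

lemma greedy_key {X : Type*} [MetricSpace X] (n : ℕ)
    (p : Fin n → X)
    (greedy : ∀ i : Fin n, 0 < (i : ℕ) →
      infDist (p i) (prefixSet p i) = hausdorffDist (prefixSet p i) (Set.range p)) :
    ∀ i ≤ n, ∀ j k : Fin n, (j : ℕ) < i → (k : ℕ) < (j : ℕ) →
      hausdorffDist (prefixSet p i) (Set.range p) ≤ dist (p j) (p k) := by
  intro i _ j k hj hkj
  have hmemk : p k ∈ prefixSet p j := ⟨k, hkj, rfl⟩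
  have hPj_ne : (prefixSet p j).Nonempty := ⟨p k, hmemk⟩
  have hfin : ∀ m : ℕ, (prefixSet p m).Finite :=
    fun m => (Set.finite_range p).subset (prefixSet_subset_range p m)
  have hedist : EMetric.hausdorffEdist (prefixSet p (j : ℕ)) (Set.range p) ≠ ⊤ :=
    hausdorffEdist_ne_top_of_nonempty_of_bounded hPj_ne ⟨p k, ⟨k, rfl⟩⟩
      (hfin j).isBounded (Set.finite_range p).isBounded
  have step1 : infDist (p j) (prefixSet p j) ≤ dist (p j) (p k) :=
    infDist_le_dist_of_mem hmemk
  have step2 : hausdorffDist (prefixSet p (j : ℕ)) (Set.range p) ≤ dist (p j) (p k) := by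
    rw [← greedy j ((Nat.zero_le _).trans_lt hkj)]
    · exact step1
  -- monotonicity: i-th prefix contains j-th prefix
  have hmono : hausdorffDist (prefixSet p i) (Set.range p)
      ≤ hausdorffDist (prefixSet p (j : ℕ)) (Set.range p) := by
    apply hausdorffDist_le_of_infDist hausdorffDist_nonneg
    · intro x hx
      have : x ∈ Set.range p := prefixSet_subset_range p i hx
      rw [infDist_zero_of_mem this]
      exact hausdorffDist_nonneg
    · intro x hx
      have h1 : infDist x (prefixSet p i) ≤ infDist x (prefixSet p (j : ℕ)) := by
        apply infDist_le_infDist_of_subset _ hPj_ne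
        rintro y ⟨m, hm, rfl⟩
        exact ⟨m, hm.trans hj, rfl⟩
      have h2 : infDist x (prefixSet p (j : ℕ))
          ≤ hausdorffDist (Set.range p) (prefixSet p (j : ℕ)) :=
        infDist_le_hausdorffDist_of_mem hx (by rwa [EMetric.hausdorffEdist_comm])
      rw [hausdorffDist_comm] at h2
      exact h1.trans h2
  exact hmono.trans step2

/-- For a greedily ordered set, the points of the `i`-th prefix `P_i` are pairwise
separated by at least the Hausdorff distance `d_H(P_i, P)`. -/
theorem greedy_prefix_separated {X : Type*} [MetricSpace X] (n : ℕ)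
    (p : Fin n → X) (hinj : Function.Injective p)
    (greedy : ∀ i : Fin n, 0 < (i : ℕ) →
      infDist (p i) (prefixSet p i) = hausdorffDist (prefixSet p i) (Set.range p)) :
    ∀ i ≤ n, ∀ j k : Fin n, (j : ℕ) < i → (k : ℕ) < i → j ≠ k →
      hausdorffDist (prefixSet p i) (Set.range p) ≤ dist (p j) (p k) := by
  intro i hi j k hj hk hjk
  rcases lt_or_gt_of_ne (fun h : (j : ℕ) = (k : ℕ) => hjk (Fin.ext h)) with h | h
  · rw [dist_comm]
    exact greedy_key n p greedy i hi k j hk h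
  · exact greedy_key n p greedy i hi j k hj h
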